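/- Let n ≥ 1 and for (p, v) ∈ US^n let γ_{(p,v)}(t) = cos(πt) p + sin(πt) v. For k ≥ 0 define f_k : Γ_k → C([0,1], S^n) by f_k(p, v₀, …, v_k)(t) = γ_{((−1)^j p, (−1)^j v_j)}((k+1)t − j) for t ∈ [j/(k+1), (j+1)/(k+1)], j = 0, …, k; this is well-defined and continuous, with f_k(p, v̄) ∈ P_a S^n for k even and f_k(p, v̄) ∈ Λ S^n for k odd. Then for all even l, m ≥ 0, setting τ = (l+1)/(l+m+2), for every (p, v₀, …, v_l) ∈ Γ_l and (q, w₀, …, w_m) ∈ Γ_m with q = −p, one has concat^τ(f_l(p, v₀, …, v_l), f_m(q, w₀, …, w_m)) = f_{l+m+1}(p, v₀, …, v_l, −w₀, …, −w_m); in particular the left-hand side is a loop in S^n. -/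

import Mathlib

open unitInterval
open scoped RealInnerProductSpace

/-- Ambient Euclidean space `ℝ^{n+1}`. -/
abbrev Euc (n : ℕ) : Type := EuclideanSpace ℝ (Fin (n + 1))

/-- The `(k+1)`-fold fiber product `Γ_k = US^n ×_{S^n} ⋯ ×_{S^n} US^n`, realized as
tuples `(p, v₀, …, v_k)` with each `(p, vᵢ)` in the unit tangent bundle. -/
abbrev GammaSp (n k : ℕ) : Type :=
  {z : Euc n × (Fin (k + 1) → Euc n) //
    ‖z.1‖ = 1 ∧ ∀ i, ‖z.2 i‖ = 1 ∧ ⟪z.1, z.2 i⟫ = 0}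

/-!
For `x = (k + 1) t` the curve `f_k(p, v̄)` is
`cos (π x) • p + ∑ⱼ sin (π · clamp_{[j, j+1]} x) • vⱼ`: since `sin` vanishes at integer
multiples of `π`, on `[j, j + 1]` only the `j`-th term survives and
`cos (π x) = (-1)ʲ cos (π (x - j))`, which gives the piecewise formula, while continuity is
automatic. The same shift identity shows
that on `[L, L + M]` the curve is `(-1)ᴸ` times the curve built from `v_L, …, v_{L+M-1}`; for
`L = l + 1` odd this sign turns the second part of `f_{l+m+1}(p, v̄, -w̄)` into `f_m(-p, w̄)`.
-/

open Real

section BrokenGeodesic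

variable {E : Type*} [NormedAddCommGroup E] [InnerProductSpace ℝ E]

noncomputable def brokenGeodesic (p : E) (v : ℕ → E) (K : ℕ) (x : ℝ) : E :=
  cos (π * x) • p + ∑ j ∈ Finset.range K, sin (π * max (j : ℝ) (min x (j + 1))) • v j

lemma sin_pi_mul_nat (j : ℕ) : sin (π * j) = 0 := by
  rw [mul_comm, sin_nat_mul_pi]

lemma sin_pi_mul_clamp_of_le {j : ℕ} {x : ℝ} (h : x ≤ j) :
    sin (π * max (j : ℝ) (min x (j + 1))) = 0 := by
  rw [max_eq_left (min_le_of_left_le h), sin_pi_mul_nat]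

lemma sin_pi_mul_clamp_of_ge {j : ℕ} {x : ℝ} (h : (j : ℝ) + 1 ≤ x) :
    sin (π * max (j : ℝ) (min x (j + 1))) = 0 := by
  rw [min_eq_right h, max_eq_right (by linarith)]
  exact_mod_cast sin_pi_mul_nat (j + 1)

lemma brokenGeodesic_zero_right (p : E) (v : ℕ → E) (K : ℕ) :
    brokenGeodesic p v K 0 = p := by
  rw [brokenGeodesic, Finset.sum_eq_zero fun j _ => by
    rw [sin_pi_mul_clamp_of_le (Nat.cast_nonneg j), zero_smul]]
  simp

lemma brokenGeodesic_neg (p : E) (v : ℕ → E) (K : ℕ) (x : ℝ) :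
    brokenGeodesic (-p) (-v) K x = -brokenGeodesic p v K x := by
  simp only [brokenGeodesic, Pi.neg_apply, smul_neg, Finset.sum_neg_distrib, neg_add]

lemma brokenGeodesic_congr {p : E} {v w : ℕ → E} {K : ℕ} (h : ∀ j < K, v j = w j)
    (x : ℝ) :
    brokenGeodesic p v K x = brokenGeodesic p w K x := by
  unfold brokenGeodesic
  congr 1
  exact Finset.sum_congr rfl fun j hj => by rw [h j (Finset.mem_range.mp hj)]

lemma brokenGeodesic_add_of_le (p : E) (v : ℕ → E) (L M : ℕ) {x : ℝ} (hx : x ≤ L) :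
    brokenGeodesic p v (L + M) x = brokenGeodesic p v L x := by
  unfold brokenGeodesic
  rw [Finset.sum_range_add, Finset.sum_eq_zero (s := Finset.range M), add_zero]
  intro i _
  rw [sin_pi_mul_clamp_of_le (by push_cast; linarith [(i.cast_nonneg : (0 : ℝ) ≤ i)]),
    zero_smul]

lemma brokenGeodesic_add (p : E) (v : ℕ → E) (L M : ℕ) {x : ℝ} (hx : L ≤ x) :
    brokenGeodesic p v (L + M) x =
      (-1 : ℝ) ^ L • brokenGeodesic p (fun i => v (L + i)) M (x - L) := by
  have hshift : ∀ y : ℝ, π * (y + L) = π * y + L * π := fun y => by ring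
  have hhead : ∑ j ∈ Finset.range L, sin (π * max (j : ℝ) (min x (j + 1))) • v j = 0 :=
    Finset.sum_eq_zero fun j hj => by
      have : (j : ℝ) + 1 ≤ L := by exact_mod_cast Finset.mem_range.mp hj
      rw [sin_pi_mul_clamp_of_ge (this.trans hx), zero_smul]
  unfold brokenGeodesic
  rw [Finset.sum_range_add, hhead, zero_add, smul_add, Finset.smul_sum, smul_smul,
    ← cos_add_nat_mul_pi, ← hshift, sub_add_cancel]
  refine congrArg _ (Finset.sum_congr rfl fun i _ => ?_)
  rw [smul_smul, ← sin_add_nat_mul_pi, ← hshift, ← max_add_add_right, ← min_add_add_right,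
    sub_add_cancel]
  push_cast
  ring_nf

lemma brokenGeodesic_one (p : E) (v : ℕ → E) {x : ℝ} (h0 : 0 ≤ x) (h1 : x ≤ 1) :
    brokenGeodesic p v 1 x = cos (π * x) • p + sin (π * x) • v 0 := by
  simp [brokenGeodesic, h0, h1]

lemma brokenGeodesic_eq_of_mem_Icc (p : E) (v : ℕ → E) {K j : ℕ} (hj : j < K) {x : ℝ}
    (hx : x ∈ Set.Icc (j : ℝ) (j + 1)) :
    brokenGeodesic p v K x =
      (-1 : ℝ) ^ j • (cos (π * (x - j)) • p + sin (π * (x - j)) • v j) := by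
  obtain ⟨M, rfl⟩ := Nat.exists_eq_add_of_lt hj
  rw [add_assoc, brokenGeodesic_add p v j _ hx.1, add_comm M, brokenGeodesic_add_of_le _ _ _ _
    (by push_cast; linarith [hx.2]), brokenGeodesic_one _ _ (by linarith [hx.1])
    (by linarith [hx.2]), add_zero]

lemma brokenGeodesic_natCast_self (p : E) (v : ℕ → E) (K : ℕ) :
    brokenGeodesic p v K K = (-1 : ℝ) ^ K • p := by
  simpa [brokenGeodesic_zero_right] using brokenGeodesic_add p v K 0 le_rfl

lemma norm_cos_smul_add_sin_smul {p v : E} (hp : ‖p‖ = 1) (hv : ‖v‖ = 1)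
    (hpv : ⟪p, v⟫ = 0) (θ : ℝ) : ‖cos θ • p + sin θ • v‖ = 1 := by
  have hsq : ‖cos θ • p + sin θ • v‖ ^ 2 = 1 ^ 2 := by
    rw [norm_add_sq_real, real_inner_smul_left, real_inner_smul_right, hpv, norm_smul,
      norm_smul, hp, hv, Real.norm_eq_abs, Real.norm_eq_abs]
    nlinarith [cos_sq_add_sin_sq θ, sq_abs (cos θ), sq_abs (sin θ)]
  exact (pow_left_inj₀ (norm_nonneg _) zero_le_one two_ne_zero).mp hsq

lemma norm_brokenGeodesic {p : E} {v : ℕ → E} {K : ℕ} (hK : 0 < K) (hp : ‖p‖ = 1)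
    (hv : ∀ j < K, ‖v j‖ = 1 ∧ ⟪p, v j⟫ = 0) {x : ℝ} (hx : x ∈ Set.Icc (0 : ℝ) K) :
    ‖brokenGeodesic p v K x‖ = 1 := by
  obtain ⟨j, hjK, hjx⟩ : ∃ j < K, x ∈ Set.Icc (j : ℝ) (j + 1) := by
    refine ⟨min ⌊x⌋₊ (K - 1), (min_le_right _ _).trans_lt (Nat.sub_lt hK one_pos),
      (Nat.cast_le.mpr (min_le_left _ _)).trans (Nat.floor_le hx.1), ?_⟩
    rcases le_total ⌊x⌋₊ (K - 1) with h | h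
    · rw [min_eq_left h]; exact (Nat.lt_floor_add_one x).le
    · rw [min_eq_right h, Nat.cast_sub hK, Nat.cast_one, sub_add_cancel]; exact hx.2
  rw [brokenGeodesic_eq_of_mem_Icc p v hjK hjx, norm_smul, norm_pow, norm_neg, norm_one,
    one_pow, one_mul, norm_cos_smul_add_sin_smul hp (hv j hjK).1 (hv j hjK).2]

@[fun_prop]
lemma Continuous.brokenGeodesic {X : Type*} [TopologicalSpace X]
    {p : X → E} {v : X → ℕ → E} {x : X → ℝ} (hp : Continuous p) (hv : Continuous v)
    (hx : Continuous x) (K : ℕ) :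
    Continuous fun a => _root_.brokenGeodesic (p a) (v a) K (x a) := by
  unfold _root_.brokenGeodesic
  fun_prop

end BrokenGeodesic

def zeroExtend {E : Type*} [Zero E] {K : ℕ} (v : Fin K → E) : ℕ → E :=
  fun j => if h : j < K then v ⟨j, h⟩ else 0

lemma zeroExtend_of_lt {E : Type*} [Zero E] {K : ℕ} (v : Fin K → E) {j : ℕ} (h : j < K) :
    zeroExtend v j = v ⟨j, h⟩ :=
  dif_pos h

lemma continuous_zeroExtend {E : Type*} [Zero E] [TopologicalSpace E] {K : ℕ} :
    Continuous (zeroExtend : (Fin K → E) → ℕ → E) :=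
  continuous_pi fun j => by unfold zeroExtend; split_ifs <;> fun_prop

lemma mul_coe_projIcc_div {a b : ℝ} (hb : 0 < b) (ha : a ∈ Set.Icc 0 b) :
    b * (Set.projIcc (0 : ℝ) 1 zero_le_one (a / b) : ℝ) = a := by
  rw [Set.projIcc_of_mem _ ⟨div_nonneg ha.1 hb.le, (div_le_one hb).mpr ha.2⟩]
  exact mul_div_cancel₀ a hb.ne'

section GammaPath

variable {n : ℕ}

/-- The map `f_k` of the paper. -/
noncomputable def gammaPath (k : ℕ) (z : GammaSp n k) : C(I, Euc n) where
  toFun t := brokenGeodesic z.1.1 (zeroExtend z.1.2) (k + 1) ((k + 1) * t)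
  continuous_toFun := by fun_prop

lemma gammaPath_apply {k : ℕ} (z : GammaSp n k) (t : I) :
    gammaPath k z t = brokenGeodesic z.1.1 (zeroExtend z.1.2) (k + 1) ((k + 1) * t) :=
  rfl

lemma continuous_gammaPath (k : ℕ) : Continuous (gammaPath (n := n) k) :=
  ContinuousMap.continuous_of_continuous_uncurry _ <|
    Continuous.brokenGeodesic (by fun_prop) (continuous_zeroExtend.comp (by fun_prop))
      (by fun_prop) _

lemma gammaPath_zero {k : ℕ} (z : GammaSp n k) : gammaPath k z 0 = z.1.1 := by
  rw [gammaPath_apply, Set.Icc.coe_zero, mul_zero, brokenGeodesic_zero_right]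

lemma gammaPath_one {k : ℕ} (z : GammaSp n k) :
    gammaPath k z 1 = (-1 : ℝ) ^ (k + 1) • z.1.1 := by
  rw [gammaPath_apply, Set.Icc.coe_one, mul_one,
    ← brokenGeodesic_natCast_self _ (zeroExtend z.1.2)]
  push_cast
  rfl

lemma gammaPath_one_eq_neg_of_even {k : ℕ} (hk : Even k) (z : GammaSp n k) :
    gammaPath k z 1 = -gammaPath k z 0 := by
  rw [gammaPath_one, gammaPath_zero, hk.add_one.neg_one_pow, neg_one_smul]

lemma gammaPath_one_eq_of_odd {k : ℕ} (hk : Odd k) (z : GammaSp n k) :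
    gammaPath k z 1 = gammaPath k z 0 := by
  rw [gammaPath_one, gammaPath_zero, hk.add_one.neg_one_pow, one_smul]

lemma norm_gammaPath {k : ℕ} (z : GammaSp n k) (t : I) : ‖gammaPath k z t‖ = 1 := by
  refine norm_brokenGeodesic k.succ_pos z.2.1 (fun j hj => ?_)
    ⟨mul_nonneg k.cast_add_one_pos.le t.2.1, ?_⟩
  · rw [zeroExtend_of_lt _ hj]; exact z.2.2 _
  · push_cast; exact mul_le_of_le_one_right (by positivity) t.2.2

/-- `Φ₁(z, w) = (p, v₀, …, v_l, −w₀, …, −w_m)`. -/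
def gammaAppend {l m : ℕ} (z : GammaSp n l) (w : GammaSp n m) (hw : w.1.1 = -z.1.1) :
    GammaSp n (l + m + 1) :=
  ⟨(z.1.1, fun i => if h : (i : ℕ) ≤ l then z.1.2 ⟨i, by omega⟩
      else -(w.1.2 ⟨(i : ℕ) - (l + 1), by have := i.isLt; omega⟩)),
    z.2.1, fun i => by
      dsimp only
      split_ifs
      · exact z.2.2 _
      · have hwi := w.2.2 ⟨(i : ℕ) - (l + 1), by have := i.isLt; omega⟩
        rw [hw, inner_neg_left, neg_eq_zero] at hwi
        rw [norm_neg, inner_neg_right, neg_eq_zero]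
        exact hwi⟩

lemma gammaPath_gammaAppend_of_le {l m : ℕ} (z : GammaSp n l) (w : GammaSp n m)
    (hw : w.1.1 = -z.1.1) {t s : I} (hs : (l + 1) * (s : ℝ) = (l + m + 2) * t)
    (ht : (l + m + 2) * (t : ℝ) ≤ l + 1) :
    gammaPath (l + m + 1) (gammaAppend z w hw) t = gammaPath l z s := by
  have hsplit := brokenGeodesic_add_of_le z.1.1 (zeroExtend (gammaAppend z w hw).1.2) (l + 1)
    (m + 1) (x := (l + m + 2) * t) (by exact_mod_cast ht)
  rw [show l + 1 + (m + 1) = l + m + 1 + 1 by ring] at hsplit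
  rw [gammaPath_apply, gammaPath_apply, hs]
  push_cast
  rw [show (l : ℝ) + m + 1 + 1 = l + m + 2 by ring]
  refine hsplit.trans (brokenGeodesic_congr (fun j hj => ?_) _)
  rw [zeroExtend_of_lt _ hj, zeroExtend_of_lt _ (by omega)]
  exact dif_pos (show j ≤ l by omega)

lemma gammaPath_gammaAppend_of_ge {l m : ℕ} (hl : Even l) (z : GammaSp n l) (w : GammaSp n m)
    (hw : w.1.1 = -z.1.1) {t s : I} (hs : (m + 1) * (s : ℝ) = (l + m + 2) * t - (l + 1))
    (ht : l + 1 ≤ (l + m + 2) * (t : ℝ)) :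
    gammaPath (l + m + 1) (gammaAppend z w hw) t = gammaPath m w s := by
  have hsplit := brokenGeodesic_add z.1.1 (zeroExtend (gammaAppend z w hw).1.2) (l + 1)
    (m + 1) (x := (l + m + 2) * t) (by exact_mod_cast ht)
  rw [show l + 1 + (m + 1) = l + m + 1 + 1 by ring, hl.add_one.neg_one_pow, neg_one_smul]
    at hsplit
  rw [gammaPath_apply, gammaPath_apply, hs, hw]
  push_cast at hsplit ⊢
  rw [show (l : ℝ) + m + 1 + 1 = l + m + 2 by ring]
  refine hsplit.trans ?_
  rw [← neg_neg (zeroExtend w.1.2), brokenGeodesic_neg, neg_inj]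
  refine brokenGeodesic_congr (fun i hi => ?_) _
  rw [zeroExtend_of_lt _ (by omega), Pi.neg_apply, zeroExtend_of_lt _ hi]
  exact (dif_neg (show ¬ l + 1 + i ≤ l by omega)).trans (by simp)

end GammaPath

/-- The completing-manifold embeddings
`f_k : Γ_k → C([0,1], S^n)`, defined piecewise by
`f_k(p, v̄)(t) = γ_{((−1)^j p, (−1)^j v_j)}((k+1)t − j)` on `[j/(k+1), (j+1)/(k+1)]`, are
well-defined continuous maps, landing in `P_a S^n` for `k` even and in `Λ S^n` for `k`
odd; and for all even `l, m`, with `τ = (l+1)/(l+m+2)`, concatenation satisfies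
`concat^τ(f_l(p, v̄), f_m(−p, w̄)) = f_{l+m+1}(p, v₀, …, v_l, −w₀, …, −w_m)`
(in particular the left-hand side is a loop). -/
theorem stmt_17 (n : ℕ) :
    ∃ F : (k : ℕ) → GammaSp n k → C(I, Euc n),
      (∀ k, Continuous (F k)) ∧
      -- the defining piecewise formula for `f_k`
      (∀ (k : ℕ) (z : GammaSp n k) (j : ℕ) (hj : j ≤ k) (t : I),
        (j : ℝ) / (k + 1) ≤ (t : ℝ) → (t : ℝ) ≤ ((j : ℝ) + 1) / (k + 1) →
        F k z t =
          Real.cos (Real.pi * ((k + 1) * (t : ℝ) - j)) • ((-1 : ℝ) ^ j • z.1.1) +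
            Real.sin (Real.pi * ((k + 1) * (t : ℝ) - j)) •
              ((-1 : ℝ) ^ j • z.1.2 ⟨j, by omega⟩)) ∧
      -- the image consists of curves on the sphere
      (∀ (k : ℕ) (z : GammaSp n k) (t : I), ‖F k z t‖ = 1) ∧
      -- for `k` even, `f_k(z)` is an antipodal path
      (∀ k, Even k → ∀ z : GammaSp n k, F k z 1 = -(F k z 0)) ∧
      -- for `k` odd, `f_k(z)` is a loop
      (∀ k, Odd k → ∀ z : GammaSp n k, F k z 1 = F k z 0) ∧
      -- compatibility with concatenation at `τ = (l+1)/(l+m+2)`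
      (∀ l m : ℕ, Even l → Even m →
        ∀ (z : GammaSp n l) (w : GammaSp n m), w.1.1 = -z.1.1 →
          ∃ u : GammaSp n (l + m + 1),
            u.1.1 = z.1.1 ∧
            (∀ i : Fin (l + m + 2),
              u.1.2 i =
                if h : (i : ℕ) ≤ l then z.1.2 ⟨(i : ℕ), by omega⟩
                else -(w.1.2 ⟨(i : ℕ) - (l + 1), by have := i.isLt; omega⟩)) ∧
            (∀ t : I, (t : ℝ) ≤ ((l : ℝ) + 1) / ((l : ℝ) + m + 2) →
              F (l + m + 1) u t =
                F l z (Set.projIcc (0 : ℝ) 1 zero_le_one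
                  (((l : ℝ) + m + 2) / ((l : ℝ) + 1) * (t : ℝ)))) ∧
            (∀ t : I, ((l : ℝ) + 1) / ((l : ℝ) + m + 2) ≤ (t : ℝ) →
              F (l + m + 1) u t =
                F m w (Set.projIcc (0 : ℝ) 1 zero_le_one
                  ((((l : ℝ) + m + 2) * (t : ℝ) - ((l : ℝ) + 1)) / ((m : ℝ) + 1)))) ∧
            -- in particular the concatenation is a loop
            F (l + m + 1) u 1 = F (l + m + 1) u 0) := by
  refine ⟨gammaPath, continuous_gammaPath, fun k z j hj t h1 h2 => ?_,
    fun _ z t => norm_gammaPath z t, fun _ hk => gammaPath_one_eq_neg_of_even hk,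
    fun _ hk => gammaPath_one_eq_of_odd hk, fun l m hl hm z w hw => ?_⟩
  · have hk : (0 : ℝ) < k + 1 := k.cast_add_one_pos
    rw [gammaPath_apply, brokenGeodesic_eq_of_mem_Icc _ _ (Nat.lt_succ_of_le hj)
      ⟨(div_le_iff₀' hk).mp h1, (le_div_iff₀' hk).mp h2⟩, zeroExtend_of_lt _ (by omega),
      smul_add, smul_comm _ (cos _), smul_comm _ (sin _)]
  have hN : (0 : ℝ) < l + m + 2 := by positivity
  refine ⟨gammaAppend z w hw, rfl, fun _ => rfl, fun t ht => ?_, fun t ht => ?_,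
    gammaPath_one_eq_of_odd (hl.add hm).add_one _⟩
  · have ht' : (l + m + 2) * (t : ℝ) ≤ l + 1 := (le_div_iff₀' hN).mp ht
    refine gammaPath_gammaAppend_of_le z w hw ?_ ht'
    rw [div_mul_eq_mul_div, mul_coe_projIcc_div l.cast_add_one_pos
      ⟨mul_nonneg hN.le t.2.1, ht'⟩]
  · have ht' : l + 1 ≤ (l + m + 2) * (t : ℝ) := (div_le_iff₀' hN).mp ht
    refine gammaPath_gammaAppend_of_ge hl z w hw ?_ ht'
    have ht1 : (l + m + 2) * (t : ℝ) ≤ l + m + 2 := mul_le_of_le_one_right hN.le t.2.2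
    rw [mul_coe_projIcc_div m.cast_add_one_pos ⟨by linarith, by linarith⟩]
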